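/- Let A ∈ ℝ^{n×n}, B ∈ ℝ^{n×m}, F ∈ ℝ^{m×n}, and A_F := [[A, B], [F·A, F·B]]. Let S, H ∈ ℝ^{(n+m)×(n+m)} with S symmetric positive definite and S·A_Fᵀ = H. Then ρ(A + B·F) < 1 if and only if there exists a symmetric positive definite P ∈ ℝ^{(n+m)×(n+m)} such that Hᵀ·P·H ≺ S·P·S. -/

import Mathlib

open Matrix

/-- The spectral radius of a real square matrix: the supremum of the moduli of the
elements of the spectrum of the matrix regarded as a complex matrix. -/
noncomputable def specRad {N : Type*} [Fintype N] [DecidableEq N] (M : Matrix N N ℝ) : ℝ :=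
  sSup ((fun z => ‖z‖) '' spectrum ℂ (M.map Complex.ofReal))

/-!
Since `S` is symmetric and `H = S A_Fᵀ`, we have `S P S - Hᵀ P H = Q - A_F Q A_Fᵀ` for `Q = S P S`,
and `P ↦ S P S` permutes the positive definite matrices. So the condition is the discrete
Lyapunov inequality for `A_F`, which holds iff `ρ(A_F) < 1`: one direction evaluates the quadratic
form at a left eigenvector, the other takes `Q = ∑ A_F^k (A_F^k)ᵀ`, convergent by Gelfand's
formula. Finally `A_F = [I; F] [A B]` and `A + B F = [A B] [I; F]` have the same nonzero
eigenvalues.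
-/

open Filter NNReal ENNReal
open scoped ComplexOrder

theorem spectrum.exists_lt_one_eventually_norm_pow_le {A : Type*} [NormedRing A]
    [NormedAlgebra ℂ A] [CompleteSpace A] {a : A} (h : spectralRadius ℂ a < 1) :
    ∃ r : ℝ≥0, r < 1 ∧ ∀ᶠ k in atTop, ‖a ^ k‖ ≤ r ^ k := by
  obtain ⟨r, hρr, hr1⟩ := ENNReal.lt_iff_exists_nnreal_btwn.mp h
  refine ⟨r, by exact_mod_cast hr1, ?_⟩
  filter_upwards [(pow_nnnorm_pow_one_div_tendsto_nhds_spectralRadius a).eventually_lt_const hρr,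
    eventually_ne_atTop 0] with k hk hk0
  have : (‖a ^ k‖₊ : ℝ≥0∞) ≤ (r : ℝ≥0∞) ^ k := by
    calc (‖a ^ k‖₊ : ℝ≥0∞) = ((‖a ^ k‖₊ : ℝ≥0∞) ^ (1 / (k : ℝ))) ^ (k : ℝ) := by
          rw [← ENNReal.rpow_mul, one_div_mul_cancel (by exact_mod_cast hk0), ENNReal.rpow_one]
      _ ≤ (r : ℝ≥0∞) ^ (k : ℝ) := ENNReal.rpow_le_rpow hk.le k.cast_nonneg
      _ = (r : ℝ≥0∞) ^ k := ENNReal.rpow_natCast _ _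
  exact_mod_cast this

namespace Matrix

theorem map_ofReal_mul {l m n : Type*} [Fintype m] (U : Matrix l m ℝ) (V : Matrix m n ℝ) :
    (U * V).map Complex.ofReal = U.map Complex.ofReal * V.map Complex.ofReal :=
  Matrix.map_mul (f := Complex.ofRealHom)

variable {N : Type*} [Fintype N]

theorem map_ofReal_pow [DecidableEq N] (M : Matrix N N ℝ) (k : ℕ) :
    (M ^ k).map Complex.ofReal = M.map Complex.ofReal ^ k :=
  map_pow Complex.ofRealHom.mapMatrix M k

theorem exists_mulVec_eq_smul_of_mem_spectrum [DecidableEq N] {K : Type*} [Field K]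
    {M : Matrix N N K} {μ : K} (h : μ ∈ spectrum K M) : ∃ v, v ≠ 0 ∧ M *ᵥ v = μ • v := by
  rw [← spectrum_toLin', ← Module.End.hasEigenvalue_iff_mem_spectrum] at h
  obtain ⟨v, hv⟩ := h.exists_hasEigenvector
  exact ⟨v, hv.2, hv.apply_eq_smul⟩

theorem mem_spectrum_mul_comm_iff {K p q : Type*} [Field K] [Fintype p] [DecidableEq p]
    [Fintype q] [DecidableEq q] (X : Matrix p q K) (Y : Matrix q p K) {μ : K} (hμ : μ ≠ 0) :
    μ ∈ spectrum K (X * Y) ↔ μ ∈ spectrum K (Y * X) := by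
  have h := congrArg (Polynomial.eval μ) (charpoly_mul_comm' X Y)
  simp only [Polynomial.eval_mul, Polynomial.eval_pow, Polynomial.eval_X] at h
  rw [mem_spectrum_iff_isRoot_charpoly, mem_spectrum_iff_isRoot_charpoly, Polynomial.IsRoot.def,
    Polynomial.IsRoot.def, ← mul_right_inj' (pow_ne_zero (Fintype.card q) hμ), h, mul_zero,
    mul_eq_zero, or_iff_right (pow_ne_zero _ hμ)]

theorem specRad_lt_one_iff [DecidableEq N] (M : Matrix N N ℝ) :
    specRad M < 1 ↔ ∀ μ ∈ spectrum ℂ (M.map Complex.ofReal), ‖μ‖ < 1 := by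
  have hfin : ((fun z : ℂ => ‖z‖) '' spectrum ℂ (M.map Complex.ofReal)).Finite :=
    (finite_spectrum _).image _
  rcases (spectrum ℂ (M.map Complex.ofReal)).eq_empty_or_nonempty with he | hne
  · simp [specRad, he]
  · simp [specRad, hfin.csSup_lt_iff (hne.image _)]

theorem specRad_mul_comm_lt_one_iff {p q : Type*} [Fintype p] [DecidableEq p] [Fintype q]
    [DecidableEq q] (X : Matrix p q ℝ) (Y : Matrix q p ℝ) :
    specRad (X * Y) < 1 ↔ specRad (Y * X) < 1 := by
  simp only [specRad_lt_one_iff]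
  rw [map_ofReal_mul, map_ofReal_mul]
  refine forall_congr' fun μ => ?_
  rcases eq_or_ne μ 0 with rfl | hμ
  · simp
  · rw [mem_spectrum_mul_comm_iff _ _ hμ]

theorem isClosed_setOf_posSemidef : IsClosed {A : Matrix N N ℝ | A.PosSemidef} := by
  simp only [posSemidef_iff_dotProduct_mulVec, Set.ofPred_and, Set.ofPred_forall]
  exact (isClosed_eq continuous_id.matrix_conjTranspose continuous_id).inter
    (isClosed_iInter fun x => isClosed_le continuous_const (by fun_prop))

theorem PosSemidef.tsum {ι : Type*} {f : ι → Matrix N N ℝ} (hf : ∀ i, (f i).PosSemidef) :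
    (∑' i, f i).PosSemidef := by
  by_cases hs : Summable f
  · exact isClosed_setOf_posSemidef.mem_of_tendsto hs.hasSum
      (Eventually.of_forall fun s => posSemidef_sum s fun i _ => hf i)
  · rw [tsum_eq_zero_of_not_summable hs]
    exact PosSemidef.zero

theorem re_star_dotProduct_map_ofReal_mulVec (X : Matrix N N ℝ) (v : N → ℂ) :
    (star v ⬝ᵥ X.map Complex.ofReal *ᵥ v).re =
      (fun i => (v i).re) ⬝ᵥ X *ᵥ (fun i => (v i).re) +
        (fun i => (v i).im) ⬝ᵥ X *ᵥ (fun i => (v i).im) := by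
  simp only [dotProduct, mulVec, Finset.mul_sum, ← Finset.sum_add_distrib, Complex.re_sum]
  refine Finset.sum_congr rfl fun i _ => Finset.sum_congr rfl fun j _ => ?_
  simp only [Pi.star_apply, map_apply, Complex.star_def, Complex.mul_re, Complex.conj_re,
    Complex.conj_im, Complex.mul_im, Complex.ofReal_re, Complex.ofReal_im]
  ring

theorem PosDef.map_ofReal {Q : Matrix N N ℝ} (hQ : Q.PosDef) : (Q.map Complex.ofReal).PosDef := by
  have hQc : (Q.map Complex.ofReal).IsHermitian :=
    hQ.isHermitian.map _ fun x => (Complex.conj_ofReal x).symm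
  refine PosDef.of_dotProduct_mulVec_pos hQc fun v hv => Complex.pos_iff.mpr
    ⟨?_, (hQc.im_star_dotProduct_mulVec_self v).symm⟩
  have hpos : ∀ x : N → ℝ, x ≠ 0 → 0 < x ⬝ᵥ Q *ᵥ x := fun x hx => by
    simpa using hQ.dotProduct_mulVec_pos hx
  have hnonneg : ∀ x : N → ℝ, 0 ≤ x ⬝ᵥ Q *ᵥ x := fun x => by
    simpa using hQ.posSemidef.dotProduct_mulVec_nonneg x
  rw [re_star_dotProduct_map_ofReal_mulVec]
  by_cases hre : (fun i => (v i).re) = 0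
  · have him : (fun i => (v i).im) ≠ 0 := fun him =>
      hv (funext fun i => Complex.ext (congrFun hre i) (congrFun him i))
    exact add_pos_of_nonneg_of_pos (hnonneg _) (hpos _ him)
  · exact add_pos_of_pos_of_nonneg (hpos _ hre) (hnonneg _)

theorem norm_lt_one_of_mem_spectrum_of_posDef [DecidableEq N] {𝕜 : Type*} [RCLike 𝕜]
    {M Q : Matrix N N 𝕜} (hQ : Q.PosDef) (hL : (Q - M * Q * Mᴴ).PosDef) {μ : 𝕜}
    (hμ : μ ∈ spectrum 𝕜 M) : ‖μ‖ < 1 := by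
  have hμ' : star μ ∈ spectrum 𝕜 Mᴴ := by
    rwa [← star_eq_conjTranspose, spectrum.map_star, Set.star_mem_star]
  obtain ⟨v, hv, hMv⟩ := exists_mulVec_eq_smul_of_mem_spectrum hμ'
  have hquad : star v ⬝ᵥ (M * Q * Mᴴ) *ᵥ v = ((‖μ‖ ^ 2 : ℝ) : 𝕜) * (star v ⬝ᵥ Q *ᵥ v) := by
    rw [← mulVec_mulVec, ← mulVec_mulVec, hMv, dotProduct_mulVec, ← conjTranspose_conjTranspose M,
      ← star_mulVec, hMv, star_smul, mulVec_smul, smul_dotProduct,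
      dotProduct_smul, smul_smul, star_star, smul_eq_mul, RCLike.star_def, RCLike.mul_conj]
    push_cast; ring
  have hq := hQ.re_dotProduct_pos hv
  have h := hL.re_dotProduct_pos hv
  rw [sub_mulVec, dotProduct_sub, hquad, map_sub, RCLike.re_ofReal_mul, ← one_sub_mul] at h
  exact (pow_lt_one_iff_of_nonneg (norm_nonneg μ) two_ne_zero).mp
    (sub_pos.mp (pos_of_mul_pos_left h hq.le))

theorem spectralRadius_le_ofReal_specRad [DecidableEq N] (M : Matrix N N ℝ) :
    spectralRadius ℂ (M.map Complex.ofReal) ≤ ENNReal.ofReal (specRad M) :=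
  iSup₂_le fun z hz => by
    rw [← ENNReal.ofReal_coe_nnreal, coe_nnnorm]
    exact ENNReal.ofReal_le_ofReal
      (le_csSup ((finite_spectrum _).image _).bddAbove (Set.mem_image_of_mem _ hz))

-- The Frobenius norm is submultiplicative, invariant under transposition and preserved by
-- `map Complex.ofReal`.
open scoped Matrix.Norms.Frobenius in
theorem summable_pow_mul_transpose_pow [DecidableEq N] {M : Matrix N N ℝ} (h : specRad M < 1) :
    Summable fun k => M ^ k * (M ^ k)ᵀ := by
  have hρ : spectralRadius ℂ (M.map Complex.ofReal) < 1 :=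
    (spectralRadius_le_ofReal_specRad M).trans_lt (ENNReal.ofReal_lt_one.mpr h)
  obtain ⟨r, hr1, hev⟩ := spectrum.exists_lt_one_eventually_norm_pow_le hρ
  refine .of_norm_bounded_eventually_nat (summable_geometric_of_lt_one (by positivity)
    (pow_lt_one₀ r.coe_nonneg (by exact_mod_cast hr1) two_ne_zero)) ?_
  filter_upwards [hev] with k hk
  calc ‖M ^ k * (M ^ k)ᵀ‖ ≤ ‖M ^ k‖ * ‖(M ^ k)ᵀ‖ := frobenius_norm_mul _ _
    _ = ‖M.map Complex.ofReal ^ k‖ ^ 2 := by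
      rw [frobenius_norm_transpose, ← map_ofReal_pow,
        frobenius_norm_map_eq _ _ Complex.norm_real, sq]
    _ ≤ ((r : ℝ) ^ k) ^ 2 := by gcongr
    _ = ((r : ℝ) ^ 2) ^ k := by ring

theorem exists_posDef_sub_mul_mul_transpose_eq_one [DecidableEq N] {M : Matrix N N ℝ}
    (h : specRad M < 1) : ∃ Q : Matrix N N ℝ, Q.PosDef ∧ Q - M * Q * Mᵀ = 1 := by
  have hs := summable_pow_mul_transpose_pow h
  set Q := ∑' k, M ^ k * (M ^ k)ᵀ with hQdef
  have hstein : Q = 1 + M * Q * Mᵀ := calc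
    Q = M ^ 0 * (M ^ 0)ᵀ + ∑' k, M ^ (k + 1) * (M ^ (k + 1))ᵀ := hs.tsum_eq_zero_add
    _ = 1 + M * Q * Mᵀ := by
      rw [hQdef, ← hs.tsum_mul_left, ← (hs.mul_left M).tsum_mul_right]
      simp only [pow_zero, transpose_one, mul_one, pow_succ', transpose_mul, mul_assoc]
  have hQ : Q.PosSemidef := PosSemidef.tsum fun k => by
    simpa using posSemidef_self_mul_conjTranspose (M ^ k)
  refine ⟨Q, ?_, sub_eq_iff_eq_add.mpr hstein⟩
  rw [hstein]
  simpa using PosDef.one.add_posSemidef (hQ.mul_mul_conjTranspose_same M)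

theorem specRad_lt_one_iff_exists_posDef [DecidableEq N] (M : Matrix N N ℝ) :
    specRad M < 1 ↔ ∃ Q : Matrix N N ℝ, Q.PosDef ∧ (Q - M * Q * Mᵀ).PosDef := by
  refine ⟨fun h => ?_, fun ⟨Q, hQ, hL⟩ => ?_⟩
  · obtain ⟨Q, hQ, hL⟩ := exists_posDef_sub_mul_mul_transpose_eq_one h
    exact ⟨Q, hQ, hL ▸ PosDef.one⟩
  · refine (specRad_lt_one_iff M).mpr fun μ hμ => norm_lt_one_of_mem_spectrum_of_posDef
      hQ.map_ofReal ?_ hμ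
    have := hL.map_ofReal
    rwa [Matrix.map_sub _ Complex.ofReal_sub, map_ofReal_mul, map_ofReal_mul,
      ← conjTranspose_eq_transpose_of_trivial,
      conjTranspose_map _ fun x => (Complex.conj_ofReal x).symm] at this

theorem exists_posDef_star_mul_mul_iff {R : Type*} [Ring R] [PartialOrder R] [StarRing R]
    [DecidableEq N] {U : Matrix N N R} (hU : IsUnit U) (p : Matrix N N R → Prop) :
    (∃ P : Matrix N N R, P.PosDef ∧ p (star U * P * U)) ↔ ∃ Q : Matrix N N R, Q.PosDef ∧ p Q := by
  refine ⟨fun ⟨P, hP, hp⟩ => ⟨_, hU.posDef_star_left_conjugate_iff.mpr hP, hp⟩,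
    fun ⟨Q, hQ, hq⟩ => ?_⟩
  obtain ⟨u, rfl⟩ := hU
  have hcancel : star u.val * (star u⁻¹.val * Q * u⁻¹.val) * u.val = Q := by
    rw [← mul_assoc, ← mul_assoc, ← star_mul, Units.inv_mul, star_one, one_mul, mul_assoc,
      Units.inv_mul, mul_one]
  refine ⟨_, u⁻¹.isUnit.posDef_star_left_conjugate_iff.mpr hQ, ?_⟩
  rwa [hcancel]

end Matrix

/-- Data-driven stability evaluation: with valid data `S ≻ 0`, `H = S·A_Fᵀ`, the closed loop
`A + B·F` is Schur stable iff there is a symmetric `P ≻ 0` with `Hᵀ·P·H ≺ S·P·S`. -/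
theorem stability_evaluation {n m : ℕ}
    (A : Matrix (Fin n) (Fin n) ℝ) (B : Matrix (Fin n) (Fin m) ℝ)
    (F : Matrix (Fin m) (Fin n) ℝ)
    (S H : Matrix (Fin n ⊕ Fin m) (Fin n ⊕ Fin m) ℝ)
    (hS : S.PosDef)
    (hH : S * (Matrix.fromBlocks A B (F * A) (F * B))ᵀ = H) :
    specRad (A + B * F) < 1 ↔
      ∃ P : Matrix (Fin n ⊕ Fin m) (Fin n ⊕ Fin m) ℝ,
        P.PosDef ∧ (S * P * S - Hᵀ * P * H).PosDef := by
  set AF := Matrix.fromBlocks A B (F * A) (F * B)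
  have hAF : AF = fromRows (1 : Matrix (Fin n) (Fin n) ℝ) F * fromCols A B := by
    rw [fromRows_mul_fromCols, Matrix.one_mul, Matrix.one_mul]
  have hABF : A + B * F = fromCols A B * fromRows (1 : Matrix (Fin n) (Fin n) ℝ) F := by
    rw [fromCols_mul_fromRows, Matrix.mul_one]
  have hSstar : star S = S := hS.isHermitian.eq
  have hHPH : ∀ P, Hᵀ * P * H = AF * (S * P * S) * AFᵀ := fun P => by
    rw [← hH, transpose_mul, transpose_transpose, ← conjTranspose_eq_transpose_of_trivial S,
      hS.isHermitian.eq]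
    noncomm_ring
  rw [hABF, ← specRad_mul_comm_lt_one_iff, ← hAF, specRad_lt_one_iff_exists_posDef,
    ← exists_posDef_star_mul_mul_iff hS.isUnit, hSstar]
  simp only [hHPH]
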